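/- Let M^O = [[0, −1], [1, 0]], M^L = [[0, 0], [0, −√2]], M^R = [[√2, 0], [0, 0]] be the 2×2 complex matrices defining the exact scar state |Φ₁⟩ of the PXP chain. Then for every n ≥ 1 and every word (s_1, …, s_n) ∈ {O, L, R}^n, Σ_{k=1}^{n} Tr(M^{s_1} ⋯ M^{s_{k−1}} · F^{s_k} · M^{s_{k+1}} ⋯ M^{s_n}) = 0, where F^O = M^L + M^R and F^L = F^R = M^O. (Hence |Φ₁⟩ is annihilated by the on-site Hamiltonian H1 and is an exact E = 0 eigenstate of the periodic PXP chain.) -/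

import Mathlib

open Matrix

/-- The blocked three-letter alphabet `{O, L, R}`. -/
inductive Blk | O | L | R
deriving DecidableEq

/-- The MPS tensors of the exact scar state `|Φ₁⟩` of the PXP chain. -/
noncomputable def MPhi1 : Blk → Matrix (Fin 2) (Fin 2) ℂ
  | .O => !![0, -1; 1, 0]
  | .L => !![0, 0; 0, -(Real.sqrt 2 : ℂ)]
  | .R => !![(Real.sqrt 2 : ℂ), 0; 0, 0]

/-- The defect matrices: `F^O = M^L + M^R`, `F^L = F^R = M^O`. -/
noncomputable def FPhi1 : Blk → Matrix (Fin 2) (Fin 2) ℂ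
  | .O => MPhi1 .L + MPhi1 .R
  | .L => MPhi1 .O
  | .R => MPhi1 .O

/-!
Every defect matrix is a commutator, `F^s = Q M^s - M^s Q` with `Q = (√2/2) σˣ`. Since
`x ↦ Q x - x Q` is a derivation, the insertion sum over a word is `Q P - P Q` for the product
`P = M^{s_1} ⋯ M^{s_n}`, and the trace of a commutator vanishes.
-/

theorem sum_prod_ofFn_ite_eq_of_leibniz {R : Type*} [Ring R] (D : R → R)
    (hD : ∀ x y, D (x * y) = D x * y + x * D y) (n : ℕ) (a : Fin n → R) :
    ∑ k : Fin n, (List.ofFn fun j => if j = k then D (a j) else a j).prod =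
      D (List.ofFn a).prod := by
  induction n with
  | zero =>
    have hD1 : D 1 = 0 := by simpa using hD 1 1
    simp [hD1]
  | succ n ih =>
    simp only [Fin.sum_univ_succ, List.ofFn_succ, List.prod_cons, Fin.succ_ne_zero,
      (Fin.succ_ne_zero _).symm, if_true, if_false, Fin.succ_inj, ← Finset.mul_sum, ih, hD]

theorem sum_prod_ofFn_ite_commutator {R : Type*} [Ring R] (q : R) (n : ℕ) (a : Fin n → R) :
    ∑ k : Fin n, (List.ofFn fun j => if j = k then q * a j - a j * q else a j).prod =
      q * (List.ofFn a).prod - (List.ofFn a).prod * q :=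
  sum_prod_ofFn_ite_eq_of_leibniz (fun x => q * x - x * q) (fun x y => by noncomm_ring) n a

noncomputable def QPhi1 : Matrix (Fin 2) (Fin 2) ℂ :=
  !![0, (Real.sqrt 2 : ℂ) / 2; (Real.sqrt 2 : ℂ) / 2, 0]

theorem FPhi1_eq_commutator (b : Blk) : FPhi1 b = QPhi1 * MPhi1 b - MPhi1 b * QPhi1 := by
  have hsqrt2 : (Real.sqrt 2 : ℂ) * Real.sqrt 2 = 2 := by
    exact_mod_cast Real.mul_self_sqrt zero_le_two
  cases b <;> ext i j <;> fin_cases i <;> fin_cases j <;>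
    simp [FPhi1, MPhi1, QPhi1] <;> grind

theorem Phi1_insertion_sum_eq_zero_general
    (n : ℕ) (s : Fin n → Blk) :
    ∑ k : Fin n,
      Matrix.trace ((List.ofFn fun j : Fin n =>
        if j = k then FPhi1 (s j) else MPhi1 (s j)).prod) = 0 := by
  rw [← Matrix.trace_sum]
  simp only [FPhi1_eq_commutator]
  rw [sum_prod_ofFn_ite_commutator QPhi1 n (fun j => MPhi1 (s j)), trace_sub, trace_mul_comm,
    sub_self]

/-- for the `|Φ₁⟩` MPS tensors, the sum over all single-defect
insertion amplitudes vanishes for every word, hence `|Φ₁⟩` is an exact `E = 0`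
eigenstate of the periodic PXP chain. -/
theorem Phi1_insertion_sum_eq_zero
    (n : ℕ) (hn : 1 ≤ n) (s : Fin n → Blk) :
    ∑ k : Fin n,
      Matrix.trace ((List.ofFn fun j : Fin n =>
        if j = k then FPhi1 (s j) else MPhi1 (s j)).prod) = 0 :=
  Phi1_insertion_sum_eq_zero_general n s
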